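/- Let a ∈ ℝ with a ∉ {0, 1}, λ := a/(1 − a), M := {(z¹, z²) ∈ ℂ² : |Re z¹| < 1 and |z²| < 1}, and ρ_a(z¹, z²) := 2(Re z¹ + 1)^a (Re z² + 1)^{1−a}. On ℂ³ with coordinates (w, z¹, z²) (real tangent vectors identified with elements of ℂ³), define the smooth vector fields X₀(w,z) := (i, 0, 0), X₁ := (0, i, 0), X₂ := (0, 0, i), X₃(w,z) := (1/2)(0, z¹ + 1, −λ(z² + 1)), X₄(w,z) := (1/2)(2a(w + 2), z¹ + 1, λ(z² + 1)). Let F(w, z¹, z²) := Re w − ρ_a(z¹, z²) + 2 on ℂ × M and S_a := {p ∈ ℂ × M : F(p) = 0}. Then each of X₀, X₁, X₂, X₃, X₄ is tangent to S_a: for every p ∈ S_a and every j ∈ {0,…,4}, the derivative of F at p in the direction of the vector X_j(p) vanishes, i.e., dF_p(X_j(p)) = 0. -/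

import Mathlib

/-! Only real parts of the tangent vectors matter, since `F` depends on `(Re w, Re z¹, Re z²)`.
Writing `ρ = 2 A^a B^(1-a)` with `A = Re z¹ + 1`, `B = Re z² + 1`, logarithmic differentiation gives
`dF(v) = Re v₀ - ρ (a Re v₁ / A + (1-a) Re v₂ / B)`. The fields `X₀, X₁, X₂` are purely imaginary.
Along `X₃` the bracket is `(a - (1-a) λ) / 2 = 0`, and along `X₄` it is `a`, which cancels
`Re v₀ = a (Re w + 2) = a ρ` on `S_a`. -/

open ContinuousLinearMap Complex

theorem HasFDerivAt.rpow_mul_rpow {E : Type*} [NormedAddCommGroup E] [NormedSpace ℝ E]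
    {f g : E → ℝ} {f' g' : StrongDual ℝ E} {x : E} (hf : HasFDerivAt f f' x)
    (hg : HasFDerivAt g g' x) (hfx : 0 < f x) (hgx : 0 < g x) (a b : ℝ) :
    HasFDerivAt (fun y => f y ^ a * g y ^ b)
      ((f x ^ a * g x ^ b) • ((a / f x) • f' + (b / g x) • g')) x := by
  refine ((hf.rpow_const (p := a) (.inl hfx.ne')).mul
    (hg.rpow_const (p := b) (.inl hgx.ne'))).congr_fderiv ?_
  ext v
  simp only [Real.rpow_sub_one hfx.ne', Real.rpow_sub_one hgx.ne', add_apply, smul_apply,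
    smul_eq_mul]
  ring

theorem fderiv_re_sub_rpow_mul_rpow_apply (a b : ℝ) (p : ℂ × ℂ × ℂ)
    (hA : 0 < p.2.1.re + 1) (hB : 0 < p.2.2.re + 1) (v : ℂ × ℂ × ℂ) :
    fderiv ℝ (fun q : ℂ × ℂ × ℂ => q.1.re - 2 * (q.2.1.re + 1) ^ a * (q.2.2.re + 1) ^ b + 2) p v
      = v.1.re - 2 * (p.2.1.re + 1) ^ a * (p.2.2.re + 1) ^ b *
          (a / (p.2.1.re + 1) * v.2.1.re + b / (p.2.2.re + 1) * v.2.2.re) := by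
  have hw : HasFDerivAt (fun q : ℂ × ℂ × ℂ => q.1.re) (reCLM.comp (fst ℝ ℂ (ℂ × ℂ))) p :=
    (reCLM.comp (fst ℝ ℂ (ℂ × ℂ))).hasFDerivAt
  have hz₁ : HasFDerivAt (fun q : ℂ × ℂ × ℂ => q.2.1.re + 1)
      (reCLM.comp ((fst ℝ ℂ ℂ).comp (snd ℝ ℂ (ℂ × ℂ)))) p :=
    (reCLM.comp ((fst ℝ ℂ ℂ).comp (snd ℝ ℂ (ℂ × ℂ)))).hasFDerivAt.add_const 1
  have hz₂ : HasFDerivAt (fun q : ℂ × ℂ × ℂ => q.2.2.re + 1)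
      (reCLM.comp ((snd ℝ ℂ ℂ).comp (snd ℝ ℂ (ℂ × ℂ)))) p :=
    (reCLM.comp ((snd ℝ ℂ ℂ).comp (snd ℝ ℂ (ℂ × ℂ)))).hasFDerivAt.add_const 1
  have hF := show HasFDerivAt
      (fun q : ℂ × ℂ × ℂ => q.1.re - 2 * ((q.2.1.re + 1) ^ a * (q.2.2.re + 1) ^ b) + 2) _ p from
    (hw.sub ((hz₁.rpow_mul_rpow hz₂ hA hB a b).const_mul 2)).add_const 2
  simp_rw [mul_assoc (2 : ℝ)]
  rw [hF.fderiv]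
  simp only [add_apply, sub_apply, smul_apply, comp_apply, coe_fst', coe_snd', reCLM_apply,
    smul_eq_mul]

theorem stmt10 (a : ℝ) (ha1 : a ≠ 1) (l : ℝ) (hl : l = a / (1 - a))
    (X0 X1 X2 X3 X4 : ℂ × ℂ × ℂ → ℂ × ℂ × ℂ)
    (hX0 : ∀ p, X0 p = ((Complex.I, 0, 0) : ℂ × ℂ × ℂ))
    (hX1 : ∀ p, X1 p = ((0, Complex.I, 0) : ℂ × ℂ × ℂ))
    (hX2 : ∀ p, X2 p = ((0, 0, Complex.I) : ℂ × ℂ × ℂ))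
    (hX3 : ∀ p : ℂ × ℂ × ℂ, X3 p =
      ((1 : ℂ) / 2) • (((0 : ℂ), p.2.1 + 1, -(l : ℂ) * (p.2.2 + 1)) : ℂ × ℂ × ℂ))
    (hX4 : ∀ p : ℂ × ℂ × ℂ, X4 p =
      ((1 : ℂ) / 2) • ((2 * (a : ℂ) * (p.1 + 2), p.2.1 + 1, (l : ℂ) * (p.2.2 + 1)) : ℂ × ℂ × ℂ))
    (F : ℂ × ℂ × ℂ → ℝ)
    (hF : ∀ p : ℂ × ℂ × ℂ, F p = p.1.re - 2 * (p.2.1.re + 1) ^ a * (p.2.2.re + 1) ^ (1 - a) + 2)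
    (p : ℂ × ℂ × ℂ)
    (hp1 : |p.2.1.re| < 1) (hp2 : ‖p.2.2‖ < 1) (hpS : F p = 0) :
    fderiv ℝ F p (X0 p) = 0 ∧ fderiv ℝ F p (X1 p) = 0 ∧ fderiv ℝ F p (X2 p) = 0 ∧
    fderiv ℝ F p (X3 p) = 0 ∧ fderiv ℝ F p (X4 p) = 0 := by
  have hA : 0 < p.2.1.re + 1 := by linarith [neg_abs_le p.2.1.re]
  have hB : 0 < p.2.2.re + 1 := by linarith [neg_abs_le p.2.2.re, abs_re_le_norm p.2.2]
  have hla : (1 - a) * l = a := by rw [hl]; field_simp [sub_ne_zero.mpr ha1.symm]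
  have hw : p.1.re + 2 = 2 * (p.2.1.re + 1) ^ a * (p.2.2.re + 1) ^ (1 - a) := by
    linarith [hF p]
  have dF := fderiv_re_sub_rpow_mul_rpow_apply a (1 - a) p hA hB
  rw [show F = _ from funext hF]
  refine ⟨?_, ?_, ?_, ?_, ?_⟩
  · rw [dF, hX0]; simp
  · rw [dF, hX1]; simp
  · rw [dF, hX2]; simp
  · rw [dF, hX3]
    simp only [one_div, neg_mul, Prod.smul_mk, smul_eq_mul, mul_zero, mul_neg, zero_re, mul_re,
      inv_re, re_ofNat, normSq_ofNat, div_self_mul_self', add_re, one_re, inv_im, im_ofNat,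
      neg_zero, zero_div, add_im, one_im, add_zero, zero_mul, sub_zero, neg_re, ofReal_re,
      ofReal_im, mul_im, zero_sub]
    field_simp
    linear_combination (p.2.1.re + 1) ^ a * (p.2.2.re + 1) ^ (1 - a) * hla
  · rw [dF, hX4]
    simp only [one_div, Prod.smul_mk, smul_eq_mul, mul_re, inv_re, re_ofNat, normSq_ofNat,
      div_self_mul_self', ofReal_re, im_ofNat, ofReal_im, mul_zero, sub_zero, add_re, mul_im,
      zero_mul, add_zero, add_im, inv_im, neg_zero, zero_div, one_re, one_im]
    field_simp
    linear_combination a * hw - (p.2.1.re + 1) ^ a * (p.2.2.re + 1) ^ (1 - a) * hla
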